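/- Let q be an odd prime power with q ≡ 3 (mod 4), and let η be the quadratic character of F_q. For each b ∈ F_q, let N(b) be the number of x ∈ F_q satisfying η(x+1)(x+1) + η(x)x = b. Then N(1) = (q+5)/4, N(−1) = (q+1)/4, the number of b ≠ ±1 with N(b) = 2 is (q−3)/4, and the number of b with N(b) = 0 is (3q−5)/4. -/

import Mathlib

/-!
Write `g t = η t * t`. Since `η (-1) = -1`, `g` is even, so `f x = g (x + 1) + g x` is
invariant under the involution `x ↦ -1 - x`. Away from `x = 0, -1` (where `f = 1`), `f x`
depends only on the sign pattern `(η x, η (x + 1))`: it is `1` on `(-, +)`, `-1` on `(+, -)`,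
`2x + 1` on `(+, +)` and `-(2x + 1) = 2(-1 - x) + 1` on `(-, -)`, the class that the involution
swaps with `(+, +)`. Hence for `b ≠ ±1` the fibre `f⁻¹(b)` is `{y, -1 - y}` if `b = 2y + 1`
with `y` in the class `(+, +)`, and empty otherwise. The class sizes come from the Jacobi sum
`∑ η x η (x + 1) = -1`: expanding `∑ (1 + ε η x)(1 + δ η (x + 1))` gives
`4 #{x | η x = ε, η (x + 1) = δ} = q - εδ - (1 + δ) - (1 - ε)`.
-/

open Finset

lemma ncard_image_two_mul_add_one {F : Type*} [Field F] (hF : ringChar F ≠ 2) (s : Set F) :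
    ((fun y => 2 * y + 1) '' s).ncard = s.ncard :=
  Set.ncard_image_of_injective s fun _ _ hxy =>
    mul_left_cancel₀ (Ring.two_ne_zero hF) (add_right_cancel hxy)

section

variable {F : Type*} [Field F] [Fintype F] [DecidableEq F]

lemma quadraticChar_neg_one_of_card_mod_four (h4 : Fintype.card F % 4 = 3) :
    quadraticChar F (-1) = -1 := by
  rw [quadraticChar_neg_one_iff_not_isSquare, FiniteField.isSquare_neg_one_iff]
  exact not_not.mpr h4

lemma ringChar_ne_two_of_quadraticChar_neg_one (h : quadraticChar F (-1) = -1) :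
    ringChar F ≠ 2 := fun h2 => by
  rw [quadraticChar_eq_one_of_char_two h2 (neg_ne_zero.mpr one_ne_zero)] at h
  exact absurd h (by decide)

lemma quadraticChar_neg (h : quadraticChar F (-1) = -1) (x : F) :
    quadraticChar F (-x) = -quadraticChar F x := by
  rw [neg_eq_neg_one_mul x, map_mul, h, neg_one_mul]

lemma sum_quadraticChar_mul_quadraticChar_add_one (hF : ringChar F ≠ 2) :
    ∑ x : F, quadraticChar F x * quadraticChar F (x + 1) = -1 := by
  have hJ : jacobiSum (quadraticChar F) (quadraticChar F) = -quadraticChar F (-1) := by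
    simpa only [(quadraticChar_isQuadratic F).inv] using
      jacobiSum_nontrivial_inv (quadraticChar_ne_one hF)
  have hsq : quadraticChar F (-1) * quadraticChar F (-1) = 1 := by
    rw [← map_mul, neg_one_mul, neg_neg, map_one]
  have hJ' : jacobiSum (quadraticChar F) (quadraticChar F) =
      quadraticChar F (-1) * ∑ x : F, quadraticChar F x * quadraticChar F (x + 1) := by
    rw [jacobiSum, mul_sum]
    refine Fintype.sum_equiv (Equiv.neg F) _ _ fun x => ?_
    rw [Equiv.neg_apply, neg_add_eq_sub, neg_eq_neg_one_mul x, map_mul]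
    linear_combination -(quadraticChar F x * quadraticChar F (1 - x)) * hsq
  linear_combination quadraticChar F (-1) * (hJ'.symm.trans hJ) -
    (∑ x : F, quadraticChar F x * quadraticChar F (x + 1) + 1) * hsq

variable (F) in
def quadraticCharPattern (ε δ : ℤ) : Finset F :=
  {x | quadraticChar F x = ε ∧ quadraticChar F (x + 1) = δ}

lemma one_add_mul_quadraticChar_mul_eq_ite {ε δ : ℤ} (hε : ε = 1 ∨ ε = -1)
    (hδ : δ = 1 ∨ δ = -1) (x : F) :
    (1 + ε * quadraticChar F x) * (1 + δ * quadraticChar F (x + 1)) =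
      (if x ∈ quadraticCharPattern F ε δ then 4 else 0) + (if x = 0 then 1 + δ else 0) +
        (if x = -1 then 1 + ε * quadraticChar F (-1) else 0) := by
  by_cases hx0 : x = 0
  · subst hx0
    rcases hε with rfl | rfl <;> simp [quadraticCharPattern]
  by_cases hx1 : x = -1
  · subst hx1
    rcases hδ with rfl | rfl <;> simp [quadraticCharPattern, hx0]
  have hx1' : x + 1 ≠ 0 := fun h => hx1 (eq_neg_of_add_eq_zero_left h)
  rcases quadraticChar_dichotomy hx0 with h1 | h1 <;>
    rcases quadraticChar_dichotomy hx1' with h2 | h2 <;>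
    rcases hε with rfl | rfl <;> rcases hδ with rfl | rfl <;>
    simp only [quadraticCharPattern, mem_filter, mem_univ, true_and, h1, h2, hx0, hx1,
      if_false] <;> norm_num

lemma card_quadraticCharPattern (hF : ringChar F ≠ 2) {ε δ : ℤ} (hε : ε = 1 ∨ ε = -1)
    (hδ : δ = 1 ∨ δ = -1) :
    4 * (#(quadraticCharPattern F ε δ) : ℤ) + (1 + δ) + (1 + ε * quadraticChar F (-1)) =
      Fintype.card F - ε * δ := by
  have hsum := quadraticChar_sum_zero hF
  have hsum_shift : ∑ x : F, quadraticChar F (x + 1) = 0 :=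
    (Fintype.sum_equiv (Equiv.addRight 1) _ _ fun _ => rfl).trans hsum
  calc 4 * (#(quadraticCharPattern F ε δ) : ℤ) + (1 + δ) + (1 + ε * quadraticChar F (-1))
      = ∑ x : F, ((if x ∈ quadraticCharPattern F ε δ then 4 else 0) +
          (if x = 0 then 1 + δ else 0) +
          (if x = -1 then 1 + ε * quadraticChar F (-1) else 0)) := by
        simp [sum_add_distrib, mul_comm]
    _ = ∑ x : F, (1 + ε * quadraticChar F x) * (1 + δ * quadraticChar F (x + 1)) :=
        (sum_congr rfl fun x _ => (one_add_mul_quadraticChar_mul_eq_ite hε hδ x).symm)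
    _ = Fintype.card F - ε * δ := by
        simp only [add_mul, mul_add, one_mul, mul_one, sum_add_distrib, mul_mul_mul_comm ε,
          ← mul_sum, hsum, hsum_shift, sum_quadraticChar_mul_quadraticChar_add_one hF, sum_const,
          card_univ, Int.nsmul_eq_mul]
        ring

lemma mem_quadraticCharPattern_neg_sub_one (h : quadraticChar F (-1) = -1) {ε δ : ℤ} {x : F} :
    -1 - x ∈ quadraticCharPattern F ε δ ↔ x ∈ quadraticCharPattern F (-δ) (-ε) := by
  have hx : -1 - x = -(x + 1) := by ring
  have hx' : -1 - x + 1 = -x := by ring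
  simp only [quadraticCharPattern, mem_filter, mem_univ, true_and]
  rw [hx', hx, quadraticChar_neg h, quadraticChar_neg h, neg_eq_iff_eq_neg, neg_eq_iff_eq_neg,
    and_comm]

lemma mem_quadraticCharPattern_of_ne {x : F} (hx0 : x ≠ 0) (hx1 : x ≠ -1) :
    x ∈ quadraticCharPattern F 1 1 ∨ x ∈ quadraticCharPattern F (-1) (-1) ∨
      x ∈ quadraticCharPattern F 1 (-1) ∨ x ∈ quadraticCharPattern F (-1) 1 := by
  have hx1' : x + 1 ≠ 0 := fun h => hx1 (eq_neg_of_add_eq_zero_left h)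
  simp only [quadraticCharPattern, mem_filter, mem_univ, true_and]
  rcases quadraticChar_dichotomy hx0 with h1 | h1 <;>
    rcases quadraticChar_dichotomy hx1' with h2 | h2 <;> simp [h1, h2]

lemma ne_zero_of_mem_quadraticCharPattern {ε δ : ℤ} (hε : ε ≠ 0) (hδ : δ ≠ 0) {x : F}
    (hx : x ∈ quadraticCharPattern F ε δ) : x ≠ 0 ∧ x + 1 ≠ 0 := by
  simp only [quadraticCharPattern, mem_filter, mem_univ, true_and] at hx
  exact ⟨fun h0 => hε (by simpa [h0] using hx.1.symm),
    fun h1 => hδ (by simpa [h1] using hx.2.symm)⟩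

lemma two_mul_add_one_ne_of_mem_quadraticCharPattern (hF : ringChar F ≠ 2) {y : F}
    (hy : y ∈ quadraticCharPattern F 1 1) : 2 * y + 1 ≠ 1 ∧ 2 * y + 1 ≠ -1 := by
  obtain ⟨hy0, hy1⟩ := ne_zero_of_mem_quadraticCharPattern one_ne_zero one_ne_zero hy
  refine ⟨fun h => hy0 ?_, fun h => hy1 ?_⟩
  · exact (mul_eq_zero.mp (by linear_combination h)).resolve_left (Ring.two_ne_zero hF)
  · exact (mul_eq_zero.mp (by linear_combination h)).resolve_left (Ring.two_ne_zero hF)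

lemma four_mul_card_quadraticCharPattern_one_one (h : quadraticChar F (-1) = -1) :
    4 * #(quadraticCharPattern F 1 1) + 3 = Fintype.card F := by
  have := card_quadraticCharPattern (ringChar_ne_two_of_quadraticChar_neg_one h)
    (Or.inl rfl) (Or.inl rfl)
  rw [h] at this
  omega

lemma four_mul_card_quadraticCharPattern_one_neg_one (h : quadraticChar F (-1) = -1) :
    4 * #(quadraticCharPattern F 1 (-1)) = Fintype.card F + 1 := by
  have := card_quadraticCharPattern (ringChar_ne_two_of_quadraticChar_neg_one h)
    (Or.inl rfl) (Or.inr rfl)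
  rw [h] at this
  omega

lemma four_mul_card_quadraticCharPattern_neg_one_one (h : quadraticChar F (-1) = -1) :
    4 * #(quadraticCharPattern F (-1) 1) + 3 = Fintype.card F := by
  have := card_quadraticCharPattern (ringChar_ne_two_of_quadraticChar_neg_one h)
    (Or.inr rfl) (Or.inl rfl)
  rw [h] at this
  omega

def quadTwist (x : F) : F := ((quadraticChar F x : ℤ) : F) * x

-- The `c`-differential `g (x + 1) - c g x` of `g = quadTwist` at `c = -1`.
def negOneDiff (x : F) : F := quadTwist (x + 1) + quadTwist x

lemma quadTwist_neg (h : quadraticChar F (-1) = -1) (x : F) : quadTwist (-x) = quadTwist x := by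
  simp only [quadTwist, quadraticChar_neg h, Int.cast_neg]
  ring

lemma negOneDiff_neg_sub_one (h : quadraticChar F (-1) = -1) (x : F) :
    negOneDiff (-1 - x) = negOneDiff x := by
  rw [negOneDiff, negOneDiff, show -1 - x + 1 = -x by ring, show -1 - x = -(x + 1) by ring,
    quadTwist_neg h, quadTwist_neg h, add_comm]

lemma negOneDiff_zero : negOneDiff (0 : F) = 1 := by
  simp [negOneDiff, quadTwist]

lemma negOneDiff_neg_one (h : quadraticChar F (-1) = -1) : negOneDiff (-1 : F) = 1 := by
  simpa [negOneDiff_zero] using negOneDiff_neg_sub_one h 0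

lemma negOneDiff_of_mem_quadraticCharPattern {ε δ : ℤ} {x : F}
    (hx : x ∈ quadraticCharPattern F ε δ) : negOneDiff x = δ * (x + 1) + ε * x := by
  simp only [quadraticCharPattern, mem_filter, mem_univ, true_and] at hx
  simp only [negOneDiff, quadTwist, hx]

lemma negOneDiff_eq_iff (h : quadraticChar F (-1) = -1) {x b : F} :
    negOneDiff x = b ↔
      (b = 1 ∧ (x = 0 ∨ x = -1 ∨ x ∈ quadraticCharPattern F (-1) 1)) ∨
      (b = -1 ∧ x ∈ quadraticCharPattern F 1 (-1)) ∨
      ∃ y ∈ quadraticCharPattern F 1 1, (x = y ∨ x = -1 - y) ∧ 2 * y + 1 = b := by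
  constructor
  · rintro rfl
    by_cases hx0 : x = 0
    · exact Or.inl ⟨hx0 ▸ negOneDiff_zero, Or.inl hx0⟩
    by_cases hx1 : x = -1
    · exact Or.inl ⟨hx1 ▸ negOneDiff_neg_one h, Or.inr (Or.inl hx1)⟩
    rcases mem_quadraticCharPattern_of_ne hx0 hx1 with hx | hx | hx | hx
    all_goals
      rw [negOneDiff_of_mem_quadraticCharPattern hx]
      push_cast
    · exact Or.inr (Or.inr ⟨x, hx, Or.inl rfl, by ring⟩)
    · have hy : -1 - x ∈ quadraticCharPattern F 1 1 :=
        mem_quadraticCharPattern_neg_sub_one h |>.mpr (by simpa using hx)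
      exact Or.inr (Or.inr ⟨-1 - x, hy, Or.inr (by ring), by ring⟩)
    · exact Or.inr (Or.inl ⟨by ring, hx⟩)
    · exact Or.inl ⟨by ring, Or.inr (Or.inr hx)⟩
  · rintro (⟨rfl, rfl | rfl | hx⟩ | ⟨rfl, hx⟩ | ⟨y, hy, rfl | rfl, rfl⟩)
    · exact negOneDiff_zero
    · exact negOneDiff_neg_one h
    · rw [negOneDiff_of_mem_quadraticCharPattern hx]; push_cast; ring
    · rw [negOneDiff_of_mem_quadraticCharPattern hx]; push_cast; ring
    · rw [negOneDiff_of_mem_quadraticCharPattern hy]; push_cast; ring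
    · rw [negOneDiff_neg_sub_one h, negOneDiff_of_mem_quadraticCharPattern hy]; push_cast; ring

lemma ncard_setOf_negOneDiff_eq_one (h : quadraticChar F (-1) = -1) :
    {x : F | negOneDiff x = 1}.ncard = #(quadraticCharPattern F (-1) 1) + 2 := by
  have hF := ringChar_ne_two_of_quadraticChar_neg_one h
  have hfiber : {x : F | negOneDiff x = 1} =
      insert 0 (insert (-1) (quadraticCharPattern F (-1) 1 : Set F)) := by
    ext x
    simp only [Set.mem_ofPred_eq, negOneDiff_eq_iff h, Set.mem_insert_iff, mem_coe]
    refine ⟨?_, fun hx => Or.inl ⟨trivial, hx⟩⟩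
    rintro (⟨-, hx⟩ | ⟨h1, -⟩ | ⟨y, hy, -, h1⟩)
    · exact hx
    · exact absurd h1.symm (Ring.neg_one_ne_one_of_char_ne_two hF)
    · exact absurd h1 (two_mul_add_one_ne_of_mem_quadraticCharPattern hF hy).1
  have h0 : (0 : F) ∉ insert (-1) (quadraticCharPattern F (-1) 1 : Set F) := by
    rintro (h0 | h0)
    · exact zero_ne_one (neg_eq_zero.mp h0.symm).symm
    · exact (ne_zero_of_mem_quadraticCharPattern (by decide) one_ne_zero h0).1 rfl
  have h1 : (-1 : F) ∉ (quadraticCharPattern F (-1) 1 : Set F) := fun h1 =>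
    (ne_zero_of_mem_quadraticCharPattern (by decide) one_ne_zero h1).2 (neg_add_cancel 1)
  rw [hfiber, Set.ncard_insert_of_notMem h0, Set.ncard_insert_of_notMem h1, Set.ncard_coe_finset]

lemma ncard_setOf_negOneDiff_eq_neg_one (h : quadraticChar F (-1) = -1) :
    {x : F | negOneDiff x = -1}.ncard = #(quadraticCharPattern F 1 (-1)) := by
  have hF := ringChar_ne_two_of_quadraticChar_neg_one h
  rw [← Set.ncard_coe_finset]
  congr 1
  ext x
  simp only [Set.mem_ofPred_eq, negOneDiff_eq_iff h, mem_coe]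
  refine ⟨?_, fun hx => Or.inr (Or.inl ⟨trivial, hx⟩)⟩
  rintro (⟨h1, -⟩ | ⟨-, hx⟩ | ⟨y, hy, -, h1⟩)
  · exact absurd h1 (Ring.neg_one_ne_one_of_char_ne_two hF)
  · exact hx
  · exact absurd h1 (two_mul_add_one_ne_of_mem_quadraticCharPattern hF hy).2

lemma ncard_setOf_negOneDiff_eq_two_mul_add_one (h : quadraticChar F (-1) = -1) {y : F}
    (hy : y ∈ quadraticCharPattern F 1 1) :
    {x : F | negOneDiff x = 2 * y + 1}.ncard = 2 := by
  have hF := ringChar_ne_two_of_quadraticChar_neg_one h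
  obtain ⟨hb1, hb2⟩ := two_mul_add_one_ne_of_mem_quadraticCharPattern hF hy
  have hfiber : {x : F | negOneDiff x = 2 * y + 1} = {y, -1 - y} := by
    ext x
    simp only [Set.mem_ofPred_eq, negOneDiff_eq_iff h, Set.mem_insert_iff,
      Set.mem_singleton_iff]
    refine ⟨?_, fun hx => Or.inr (Or.inr ⟨y, hy, hx, rfl⟩)⟩
    rintro (⟨h1, -⟩ | ⟨h1, -⟩ | ⟨z, -, hx, hz⟩)
    · exact absurd h1 hb1
    · exact absurd h1 hb2
    · obtain rfl : z = y :=
        mul_left_cancel₀ (Ring.two_ne_zero hF) (add_right_cancel hz)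
      exact hx
  have hy' : y ≠ -1 - y := fun hyy => by
    have hneg := (mem_quadraticCharPattern_neg_sub_one h).mp (hyy ▸ hy)
    simp only [quadraticCharPattern, mem_filter, mem_univ, true_and] at hy hneg
    exact absurd (hy.1.symm.trans hneg.1) (by decide)
  rw [hfiber, Set.ncard_pair hy']

lemma setOf_negOneDiff_eq_eq_empty (h : quadraticChar F (-1) = -1) {b : F} (hb1 : b ≠ 1)
    (hb2 : b ≠ -1) (hb : b ∉ (fun y => 2 * y + 1) '' (quadraticCharPattern F 1 1 : Set F)) :
    {x : F | negOneDiff x = b} = ∅ := by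
  refine Set.eq_empty_of_forall_notMem fun x hx => ?_
  rcases (negOneDiff_eq_iff h).mp hx with ⟨rfl, -⟩ | ⟨rfl, -⟩ | ⟨y, hy, -, rfl⟩
  · exact hb1 rfl
  · exact hb2 rfl
  · exact hb ⟨y, hy, rfl⟩

lemma ncard_setOf_ncard_setOf_negOneDiff_eq_two (h : quadraticChar F (-1) = -1) :
    {b : F | b ≠ 1 ∧ b ≠ -1 ∧ {x | negOneDiff x = b}.ncard = 2}.ncard =
      #(quadraticCharPattern F 1 1) := by
  have hF := ringChar_ne_two_of_quadraticChar_neg_one h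
  have hset : {b : F | b ≠ 1 ∧ b ≠ -1 ∧ {x | negOneDiff x = b}.ncard = 2} =
      (fun y => 2 * y + 1) '' (quadraticCharPattern F 1 1 : Set F) := by
    ext b
    constructor
    · rintro ⟨hb1, hb2, hb⟩
      by_contra hS
      rw [setOf_negOneDiff_eq_eq_empty h hb1 hb2 hS, Set.ncard_empty] at hb
      exact absurd hb (by decide)
    · rintro ⟨y, hy, rfl⟩
      exact ⟨(two_mul_add_one_ne_of_mem_quadraticCharPattern hF hy).1,
        (two_mul_add_one_ne_of_mem_quadraticCharPattern hF hy).2,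
        ncard_setOf_negOneDiff_eq_two_mul_add_one h hy⟩
  rw [hset, ncard_image_two_mul_add_one hF, Set.ncard_coe_finset]

lemma ncard_setOf_ncard_setOf_negOneDiff_eq_zero (h : quadraticChar F (-1) = -1) :
    {b : F | {x | negOneDiff x = b}.ncard = 0}.ncard =
      Fintype.card F - (#(quadraticCharPattern F 1 1) + 2) := by
  have hF := ringChar_ne_two_of_quadraticChar_neg_one h
  set S := (fun y => 2 * y + 1) '' (quadraticCharPattern F 1 1 : Set F)
  have hset : {b : F | {x | negOneDiff x = b}.ncard = 0} = (insert 1 (insert (-1) S))ᶜ := by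
    ext b
    simp only [Set.mem_ofPred_eq, Set.mem_compl_iff, Set.mem_insert_iff, not_or]
    constructor
    · intro hb
      refine ⟨?_, ?_, ?_⟩
      · rintro rfl
        rw [ncard_setOf_negOneDiff_eq_one h] at hb
        omega
      · rintro rfl
        have := four_mul_card_quadraticCharPattern_one_neg_one h
        rw [ncard_setOf_negOneDiff_eq_neg_one h] at hb
        omega
      · rintro ⟨y, hy, rfl⟩
        rw [ncard_setOf_negOneDiff_eq_two_mul_add_one h hy] at hb
        omega
    · rintro ⟨hb1, hb2, hb⟩
      rw [setOf_negOneDiff_eq_eq_empty h hb1 hb2 hb, Set.ncard_empty]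
  have h1 : (1 : F) ∉ insert (-1) S := by
    rintro (h1 | ⟨y, hy, h1⟩)
    · exact Ring.neg_one_ne_one_of_char_ne_two hF h1.symm
    · exact (two_mul_add_one_ne_of_mem_quadraticCharPattern hF hy).1 h1
  have h2 : (-1 : F) ∉ S := fun ⟨y, hy, h2⟩ =>
    (two_mul_add_one_ne_of_mem_quadraticCharPattern hF hy).2 h2
  rw [hset, Set.ncard_compl, Nat.card_eq_fintype_card, Set.ncard_insert_of_notMem h1,
    Set.ncard_insert_of_notMem h2, ncard_image_two_mul_add_one hF, Set.ncard_coe_finset]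

end

theorem c_neg_one_spectrum_q3mod4_general
    {Fq : Type*} [Field Fq] [Fintype Fq] [DecidableEq Fq]
    (h4 : Fintype.card Fq % 4 = 3)
    (N : Fq → ℕ)
    (hN : ∀ b : Fq, N b = {x : Fq | ((quadraticChar Fq (x + 1) : ℤ) : Fq) * (x + 1) +
        ((quadraticChar Fq x : ℤ) : Fq) * x = b}.ncard) :
    N 1 = (Fintype.card Fq + 5) / 4 ∧
    N (-1) = (Fintype.card Fq + 1) / 4 ∧
    {b : Fq | b ≠ 1 ∧ b ≠ -1 ∧ N b = 2}.ncard = (Fintype.card Fq - 3) / 4 ∧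
    {b : Fq | N b = 0}.ncard = (3 * Fintype.card Fq - 5) / 4 := by
  have h := quadraticChar_neg_one_of_card_mod_four h4
  have hN' : ∀ b, N b = {x | negOneDiff x = b}.ncard := hN
  simp only [hN']
  have hA := four_mul_card_quadraticCharPattern_one_one h
  refine ⟨?_, ?_, ?_, ?_⟩
  · have := four_mul_card_quadraticCharPattern_neg_one_one h
    rw [ncard_setOf_negOneDiff_eq_one h]
    omega
  · have := four_mul_card_quadraticCharPattern_one_neg_one h
    rw [ncard_setOf_negOneDiff_eq_neg_one h]
    omega
  · rw [ncard_setOf_ncard_setOf_negOneDiff_eq_two h]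
    omega
  · rw [ncard_setOf_ncard_setOf_negOneDiff_eq_zero h]
    omega

theorem c_neg_one_spectrum_q3mod4
    {Fq : Type*} [Field Fq] [Fintype Fq] [DecidableEq Fq]
    (hq : ringChar Fq ≠ 2) (h4 : Fintype.card Fq % 4 = 3)
    (N : Fq → ℕ)
    (hN : ∀ b : Fq, N b = {x : Fq | ((quadraticChar Fq (x + 1) : ℤ) : Fq) * (x + 1) +
        ((quadraticChar Fq x : ℤ) : Fq) * x = b}.ncard) :
    N 1 = (Fintype.card Fq + 5) / 4 ∧
    N (-1) = (Fintype.card Fq + 1) / 4 ∧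
    {b : Fq | b ≠ 1 ∧ b ≠ -1 ∧ N b = 2}.ncard = (Fintype.card Fq - 3) / 4 ∧
    {b : Fq | N b = 0}.ncard = (3 * Fintype.card Fq - 5) / 4 :=
  c_neg_one_spectrum_q3mod4_general h4 N hN
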